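/- arXiv:2506.04430 — 2 statements merged into one kernel-verified Lean document; each statement's English description precedes it below -/
import Mathlib

section
/- Let A, B ∈ ℝ^{m×n} with reduced singular value decompositions A = U_A Σ_A V_A^T and B = U_B Σ_B V_B^T. Then |⟨A, U_A V_A^T − U_B V_B^T⟩| ≤ 2·‖A − B‖_{S₁} ≤ 2·√(rank(A−B))·‖A − B‖_F. -/
open scoped Matrix

/-- The nuclear norm (Schatten-1 norm) of a real matrix: the sum of its singular values,
i.e. of the square roots of the eigenvalues of `Aᵀ * A`. -/
noncomputable def nuclearNorm {m n : ℕ} (A : Matrix (Fin m) (Fin n) ℝ) : ℝ :=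
  ∑ j, Real.sqrt ((Matrix.isHermitian_conjTranspose_mul_self A).eigenvalues j)

/-- The Frobenius norm of a real matrix. -/
noncomputable def frobNorm {m n : ℕ} (A : Matrix (Fin m) (Fin n) ℝ) : ℝ :=
  Real.sqrt (∑ i, ∑ j, (A i j) ^ 2)

/-- The trace inner product `⟨X, Y⟩ := tr(Xᵀ Y)` on `ℝ^{m×n}`. -/
noncomputable def matInner {m n : ℕ} (X Y : Matrix (Fin m) (Fin n) ℝ) : ℝ :=
  Matrix.trace (Xᵀ * Y)

/-!
Write `Q_A = U_A V_Aᵀ` and `Q_B = U_B V_Bᵀ`; both are contractions. Against a contraction `Q`,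
`|⟨U Σ Vᵀ, Q⟩| ≤ tr Σ`, with equality `⟨A, Q_A⟩ = tr Σ_A` for `Q = Q_A`; and
`|⟨X, Q⟩| ≤ ‖X‖_{S₁}`, by Cauchy–Schwarz column by column in an eigenbasis of `XᵀX`. Hence
`0 ≤ ⟨A, Q_A - Q_B⟩ = ⟨A - B, Q_A⟩ - ⟨A - B, Q_B⟩ + (⟨B, Q_A⟩ - tr Σ_B) ≤ 2‖A - B‖_{S₁}`.
The second inequality is Cauchy–Schwarz over the `rank (A - B)` nonzero singular values.
-/

open Finset

namespace Matrix

variable {l m n r : Type*}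

def IsContraction [Fintype m] [Fintype n] (M : Matrix m n ℝ) : Prop :=
  ∀ v : n → ℝ, (M *ᵥ v) ⬝ᵥ (M *ᵥ v) ≤ v ⬝ᵥ v

theorem abs_transpose_mul_apply_le [Fintype l] (Y : Matrix l m ℝ) (Z : Matrix l n ℝ)
    (i : m) (j : n) : |(Yᵀ * Z) i j| ≤ √((Yᵀ * Y) i i) * √((Zᵀ * Z) j j) := by
  have hY : 0 ≤ (Yᵀ * Y) i i := by
    simpa [mul_apply, ← sq] using sum_nonneg fun k _ => sq_nonneg (Y k i)
  rw [← Real.sqrt_mul hY]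
  refine Real.abs_le_sqrt ?_
  simpa [mul_apply, ← sq] using sum_mul_sq_le_sq_mul_sq univ (fun k => Y k i) (fun k => Z k j)

theorem dotProduct_transpose_mul_self_mulVec [Fintype m] [Fintype n] (W : Matrix m n ℝ)
    (z : n → ℝ) : z ⬝ᵥ ((Wᵀ * W) *ᵥ z) = (W *ᵥ z) ⬝ᵥ (W *ᵥ z) := by
  rw [← mulVec_mulVec, dotProduct_mulVec, vecMul_transpose]

theorem mulVec_dotProduct_mulVec_self_of_transpose_mul_self_eq_one [Fintype m] [Fintype n]
    [DecidableEq n] {V : Matrix m n ℝ} (hV : Vᵀ * V = 1) (w : n → ℝ) :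
    (V *ᵥ w) ⬝ᵥ (V *ᵥ w) = w ⬝ᵥ w := by
  rw [← dotProduct_transpose_mul_self_mulVec, hV, one_mulVec]

theorem transpose_mulVec_dotProduct_self_le [Fintype n] [Fintype r] [DecidableEq r]
    {V : Matrix n r ℝ} (hV : Vᵀ * V = 1) (x : n → ℝ) : (Vᵀ *ᵥ x) ⬝ᵥ (Vᵀ *ᵥ x) ≤ x ⬝ᵥ x := by
  set w := Vᵀ *ᵥ x
  have hxw : x ⬝ᵥ (V *ᵥ w) = w ⬝ᵥ w := by rw [dotProduct_mulVec, ← mulVec_transpose]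
  have hnonneg : 0 ≤ (x - V *ᵥ w) ⬝ᵥ (x - V *ᵥ w) := sum_nonneg fun _ _ => mul_self_nonneg _
  rw [sub_dotProduct, dotProduct_sub, dotProduct_sub, hxw, dotProduct_comm (V *ᵥ w), hxw,
    mulVec_dotProduct_mulVec_self_of_transpose_mul_self_eq_one hV] at hnonneg
  linarith

theorem isContraction_mul_transpose [Fintype m] [Fintype n] [Fintype r] [DecidableEq r]
    {U : Matrix m r ℝ} {V : Matrix n r ℝ} (hU : Uᵀ * U = 1) (hV : Vᵀ * V = 1) :
    (U * Vᵀ).IsContraction := fun x => by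
  rw [← mulVec_mulVec, mulVec_dotProduct_mulVec_self_of_transpose_mul_self_eq_one hU]
  exact transpose_mulVec_dotProduct_self_le hV x

theorem IsContraction.transpose_mul_mul_self_apply_le [Fintype m] [Fintype n]
    {M : Matrix m n ℝ} (hM : M.IsContraction) (V : Matrix n r ℝ) (j : r) :
    ((M * V)ᵀ * (M * V)) j j ≤ (Vᵀ * V) j j := by
  simpa [mul_apply, mulVec, dotProduct, mul_comm] using hM (fun k => V k j)

theorem abs_trace_transpose_mul_le [Fintype m] [Fintype n] (Y Z : Matrix m n ℝ) :
    |trace (Yᵀ * Z)| ≤ ∑ j, √((Yᵀ * Y) j j) * √((Zᵀ * Z) j j) :=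
  (abs_sum_le_sum_abs _ _).trans <| sum_le_sum fun j _ => abs_transpose_mul_apply_le Y Z j j

theorem abs_trace_transpose_mul_le_trace [Fintype m] [Fintype n] [Fintype r] [DecidableEq r]
    {U : Matrix m r ℝ} {S : Matrix r r ℝ} {V : Matrix n r ℝ}
    (hU : Uᵀ * U = 1) (hV : Vᵀ * V = 1) (hS : S.IsDiag) (hS₀ : ∀ i, 0 ≤ S i i)
    {M : Matrix m n ℝ} (hM : M.IsContraction) :
    |trace ((U * S * Vᵀ)ᵀ * M)| ≤ trace S := by
  have htrace : trace ((U * S * Vᵀ)ᵀ * M) = ∑ i, S i i * (Uᵀ * (M * V)) i i := by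
    rw [← hS.diagonal_diag]
    simp only [transpose_mul, transpose_transpose, diagonal_transpose, Matrix.mul_assoc]
    rw [trace_mul_comm, Matrix.mul_assoc]
    simp [trace, diagonal_mul, Matrix.mul_assoc]
  have hentry : ∀ i, |(Uᵀ * (M * V)) i i| ≤ 1 := fun i => by
    refine (abs_transpose_mul_apply_le U (M * V) i i).trans ?_
    rw [hU, one_apply_eq, Real.sqrt_one, one_mul, Real.sqrt_le_one]
    simpa [hV] using hM.transpose_mul_mul_self_apply_le V i
  rw [htrace]
  refine (abs_sum_le_sum_abs _ _).trans (sum_le_sum fun i _ => ?_)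
  rw [abs_mul, abs_of_nonneg (hS₀ i)]
  exact mul_le_of_le_one_right (hS₀ i) (hentry i)

theorem trace_transpose_mul_mul_transpose [Fintype m] [Fintype n] [Fintype r] [DecidableEq r]
    {U : Matrix m r ℝ} {V : Matrix n r ℝ} (hU : Uᵀ * U = 1) (hV : Vᵀ * V = 1)
    (S : Matrix r r ℝ) : trace ((U * S * Vᵀ)ᵀ * (U * Vᵀ)) = trace S := by
  simp only [transpose_mul, transpose_transpose, Matrix.mul_assoc]
  rw [← Matrix.mul_assoc Uᵀ, hU, Matrix.one_mul, trace_mul_comm, Matrix.mul_assoc, hV,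
    Matrix.mul_one, trace_transpose]

end Matrix

open Matrix

theorem matInner_sub_left {m n : ℕ} (X Y Z : Matrix (Fin m) (Fin n) ℝ) :
    matInner (X - Y) Z = matInner X Z - matInner Y Z := by
  simp only [matInner, Matrix.transpose_sub, Matrix.sub_mul, Matrix.trace_sub]

theorem matInner_sub_right {m n : ℕ} (X Y Z : Matrix (Fin m) (Fin n) ℝ) :
    matInner X (Y - Z) = matInner X Y - matInner X Z := by
  simp only [matInner, Matrix.mul_sub, Matrix.trace_sub]

theorem abs_matInner_le_nuclearNorm {m n : ℕ} {M : Matrix (Fin m) (Fin n) ℝ}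
    (hM : M.IsContraction) (X : Matrix (Fin m) (Fin n) ℝ) : |matInner X M| ≤ nuclearNorm X := by
  set hH := isHermitian_conjTranspose_mul_self X
  set P : Matrix (Fin n) (Fin n) ℝ := ↑hH.eigenvectorUnitary
  have hPt : Pᵀ = star P := by rw [star_eq_conjTranspose, conjTranspose_eq_transpose_of_trivial]
  have hPP : Pᵀ * P = 1 := hPt ▸ Unitary.coe_star_mul_self _
  have hPPt : P * Pᵀ = 1 := hPt ▸ Unitary.coe_mul_star_self _
  have hXP : (X * P)ᵀ * (X * P) = diagonal hH.eigenvalues := by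
    have h := hH.conjStarAlgAut_star_eigenvectorUnitary
    simp only [Unitary.conjStarAlgAut_apply, Unitary.coe_star, star_star, RCLike.ofReal_real_eq_id,
      Function.id_comp, conjTranspose_eq_transpose_of_trivial] at h
    rw [← h, transpose_mul, hPt]
    simp only [Matrix.mul_assoc]
    rfl
  have htrace : trace (Xᵀ * M) = trace ((X * P)ᵀ * (M * P)) := by
    calc trace (Xᵀ * M) = trace (Xᵀ * M * P * Pᵀ) := by
          rw [Matrix.mul_assoc _ P, hPPt, Matrix.mul_one]
      _ = trace (Pᵀ * (Xᵀ * M * P)) := trace_mul_comm _ _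
      _ = trace ((X * P)ᵀ * (M * P)) := by simp only [transpose_mul, Matrix.mul_assoc]
  rw [matInner, htrace]
  refine (abs_trace_transpose_mul_le _ _).trans (sum_le_sum fun j _ => ?_)
  rw [hXP, diagonal_apply_eq]
  refine mul_le_of_le_one_right (Real.sqrt_nonneg _) (Real.sqrt_le_one.mpr ?_)
  simpa [hPP] using hM.transpose_mul_mul_self_apply_le P j

theorem sum_eigenvalues_conjTranspose_mul_self {m n : ℕ} (X : Matrix (Fin m) (Fin n) ℝ) :
    ∑ j, (isHermitian_conjTranspose_mul_self X).eigenvalues j = ∑ i, ∑ j, X i j ^ 2 := by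
  have h := (isHermitian_conjTranspose_mul_self X).trace_eq_sum_eigenvalues
  simp only [RCLike.ofReal_real_eq_id, id] at h
  rw [← h, trace, sum_comm]
  simp [mul_apply, sq]

theorem nuclearNorm_le_sqrt_rank_mul_frobNorm {m n : ℕ} (X : Matrix (Fin m) (Fin n) ℝ) :
    nuclearNorm X ≤ √(X.rank : ℝ) * frobNorm X := by
  set hH := isHermitian_conjTranspose_mul_self X
  have heig_nonneg : ∀ j, 0 ≤ hH.eigenvalues j := eigenvalues_conjTranspose_mul_self_nonneg X
  set s := univ.filter fun j => hH.eigenvalues j ≠ 0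
  have hcard : (#s : ℝ) = X.rank := by
    rw [← rank_conjTranspose_mul_self, hH.rank_eq_card_non_zero_eigs, Fintype.card_subtype]
  calc nuclearNorm X = ∑ j ∈ s, √(hH.eigenvalues j) * √1 := by
        simp only [Real.sqrt_one, mul_one]
        refine (sum_subset (subset_univ s) fun j _ hj => ?_).symm
        simp [not_not.mp (by simpa [s] using hj)]
    _ ≤ √(∑ j ∈ s, hH.eigenvalues j) * √(∑ _j ∈ s, 1) :=
        Real.sum_sqrt_mul_sqrt_le s heig_nonneg fun _ => zero_le_one
    _ = √(∑ j ∈ s, hH.eigenvalues j) * √(#s : ℝ) := by simp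
    _ ≤ √(∑ j, hH.eigenvalues j) * √(#s : ℝ) :=
        mul_le_mul_of_nonneg_right (Real.sqrt_le_sqrt (sum_le_univ_sum_of_nonneg heig_nonneg))
          (Real.sqrt_nonneg _)
    _ = √(X.rank : ℝ) * frobNorm X := by
        rw [hcard, sum_eigenvalues_conjTranspose_mul_self, mul_comm, frobNorm]

/-- **Lemma 2 of the paper.** Let `A, B ∈ ℝ^{m×n}` with reduced SVDs
`A = U_A Σ_A V_Aᵀ` and `B = U_B Σ_B V_Bᵀ`.  Then
`|⟨A, U_A V_Aᵀ − U_B V_Bᵀ⟩| ≤ 2‖A − B‖_{S₁} ≤ 2√(rank(A−B)) ‖A − B‖_F`. -/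
theorem abs_matInner_svdFactors_le
    {m n rA rB : ℕ} (A B : Matrix (Fin m) (Fin n) ℝ)
    (UA : Matrix (Fin m) (Fin rA) ℝ) (SA : Matrix (Fin rA) (Fin rA) ℝ)
    (VA : Matrix (Fin n) (Fin rA) ℝ)
    (UB : Matrix (Fin m) (Fin rB) ℝ) (SB : Matrix (Fin rB) (Fin rB) ℝ)
    (VB : Matrix (Fin n) (Fin rB) ℝ)
    (hUA : UAᵀ * UA = 1) (hVA : VAᵀ * VA = 1)
    (hSAdiag : ∀ i j, i ≠ j → SA i j = 0) (hSApos : ∀ i, 0 ≤ SA i i)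
    (hA : A = UA * SA * VAᵀ)
    (hUB : UBᵀ * UB = 1) (hVB : VBᵀ * VB = 1)
    (hSBdiag : ∀ i j, i ≠ j → SB i j = 0) (hSBpos : ∀ i, 0 ≤ SB i i)
    (hB : B = UB * SB * VBᵀ) :
    |matInner A (UA * VAᵀ - UB * VBᵀ)| ≤ 2 * nuclearNorm (A - B) ∧
      2 * nuclearNorm (A - B) ≤ 2 * Real.sqrt ((A - B).rank : ℝ) * frobNorm (A - B) := by
  have hQA := isContraction_mul_transpose hUA hVA
  have hQB := isContraction_mul_transpose hUB hVB
  have hAQA : matInner A (UA * VAᵀ) = trace SA :=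
    hA ▸ trace_transpose_mul_mul_transpose hUA hVA SA
  have hBQB : matInner B (UB * VBᵀ) = trace SB :=
    hB ▸ trace_transpose_mul_mul_transpose hUB hVB SB
  have hAQB : |matInner A (UB * VBᵀ)| ≤ trace SA :=
    hA ▸ abs_trace_transpose_mul_le_trace hUA hVA hSAdiag hSApos hQB
  have hBQA : |matInner B (UA * VAᵀ)| ≤ trace SB :=
    hB ▸ abs_trace_transpose_mul_le_trace hUB hVB hSBdiag hSBpos hQA
  have hDQA := abs_matInner_le_nuclearNorm hQA (A - B)
  have hDQB := abs_matInner_le_nuclearNorm hQB (A - B)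
  rw [matInner_sub_left] at hDQA hDQB
  rw [matInner_sub_right]
  refine ⟨abs_le.mpr ⟨?_, ?_⟩, ?_⟩
  · linarith [abs_le.mp hAQB, (abs_nonneg _).trans hDQA]
  · linarith [abs_le.mp hBQA, abs_le.mp hDQA, abs_le.mp hDQB]
  · linarith [nuclearNorm_le_sqrt_rank_mul_frobNorm (A - B)]
end

section
/- Let f : ℝ^{m×n} → ℝ be differentiable with L-smooth gradient (‖∇f(X)−∇f(Y)‖_F ≤ L‖X−Y‖_F for all X, Y), let m ≥ n, let X† ∈ ℝ^{m×n} and M ∈ ℝ^{m×n} be arbitrary, let M = U_M Σ_M V_M^T be a reduced SVD of M, and set X‡ := X† − γ·U_M V_M^T for γ > 0. Then f(X‡) − f(X†) ≤ −γ·‖∇f(X†)‖_{S₁} + 2√n·γ·‖∇f(X†) − M‖_F + L·n·γ²/2. -/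
open scoped Matrix

attribute [local instance] Matrix.frobeniusSeminormedAddCommGroup
  Matrix.frobeniusNormedAddCommGroup Matrix.frobeniusNormedSpace

/-!
The descent inequality for the `L`-smooth `f` along the step `-γ • U Vᵀ` bounds the change of `f`
by `-γ ⟪∇f(X†), U Vᵀ⟫ + L γ² ‖U Vᵀ‖² / 2`. Both `U Vᵀ` and the polar factor `O` of `∇f(X†)`, which
satisfies `⟪∇f(X†), O⟫ = ‖∇f(X†)‖_{S₁}`, are contractions (`1 - Oᵀ O ⪰ 0`). A contraction has
`‖O‖² ≤ n`, hence `|⟪B, O⟫| ≤ √n ‖B‖`, and `⟪U Σ Vᵀ, O⟫ ≤ tr Σ` with equality for `O = U Vᵀ`.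
Comparing both pairings with `M = U Σ Vᵀ` gives
`‖∇f(X†)‖_{S₁} ≤ ⟪∇f(X†), U Vᵀ⟫ + 2 √n ‖∇f(X†) - M‖`.
-/

theorem nonneg_of_norm_sub_le_mul {E F : Type*} [NormedAddCommGroup E] [Nontrivial E]
    [SeminormedAddCommGroup F] {g : E → F} {L : ℝ} (hg : ∀ x y, ‖g x - g y‖ ≤ L * ‖x - y‖) :
    0 ≤ L := by
  obtain ⟨x, hx⟩ := exists_ne (0 : E)
  have h := (norm_nonneg _).trans (hg x 0)
  rw [sub_zero] at h
  exact nonneg_of_mul_nonneg_left h (norm_pos_iff.2 hx)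

theorem sub_le_fderiv_add_of_fderiv_sub_le {E : Type*} [NormedAddCommGroup E]
    [NormedSpace ℝ E] {f : E → ℝ} {L : ℝ} (hf : Differentiable ℝ f)
    (hLip : ∀ x y d, fderiv ℝ f y d - fderiv ℝ f x d ≤ L * ‖y - x‖ * ‖d‖) (x d : E) :
    f (x + d) - f x ≤ fderiv ℝ f x d + L * ‖d‖ ^ 2 / 2 := by
  let φ : ℝ → ℝ := fun t => f (x + t • d) - t * fderiv ℝ f x d - L * t ^ 2 * ‖d‖ ^ 2 / 2
  let φ' : ℝ → ℝ := fun t => fderiv ℝ f (x + t • d) d - fderiv ℝ f x d - L * t * ‖d‖ ^ 2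
  have hφ : ∀ t, HasDerivAt φ (φ' t) t := by
    intro t
    have hline : HasDerivAt (fun s : ℝ => x + s • d) d t := by
      simpa using ((hasDerivAt_id t).smul_const d).const_add x
    have hfline := (hf (x + t • d)).hasFDerivAt.comp_hasDerivAt t hline
    refine ((hfline.sub ((hasDerivAt_id t).mul_const (fderiv ℝ f x d))).sub
      ((((hasDerivAt_pow 2 t).const_mul L).mul_const (‖d‖ ^ 2)).div_const 2)).congr_deriv ?_
    simp only [φ']
    ring
  have hφ'_nonpos : ∀ t, 0 ≤ t → φ' t ≤ 0 := by
    intro t ht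
    calc φ' t ≤ L * ‖t • d‖ * ‖d‖ - L * t * ‖d‖ ^ 2 := by
          simpa [φ'] using hLip x (x + t • d) d
      _ = 0 := by rw [norm_smul, Real.norm_of_nonneg ht]; ring
  have hanti : AntitoneOn φ (Set.Icc 0 1) :=
    antitoneOn_of_hasDerivWithinAt_nonpos (convex_Icc 0 1)
      (fun t _ => (hφ t).continuousAt.continuousWithinAt)
      (fun t _ => (hφ t).hasDerivWithinAt) fun t ht => hφ'_nonpos t (interior_subset ht).1
  have h := hanti (Set.left_mem_Icc.2 zero_le_one) (Set.right_mem_Icc.2 zero_le_one) zero_le_one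
  norm_num [φ] at h
  linarith

namespace Matrix

section

variable {m n r : Type*} [Fintype m]

theorem transpose_mul_apply_le_sqrt_mul_sqrt (B C : Matrix m n ℝ) (k : n) :
    (Bᵀ * C) k k ≤ √((Bᵀ * B) k k) * √((Cᵀ * C) k k) := by
  simpa only [mul_apply, transpose_apply, sq] using
    Real.sum_mul_le_sqrt_mul_sqrt Finset.univ (fun i => B i k) (fun i => C i k)

variable [Fintype n] [Fintype r]

def frobeniusInner (A B : Matrix m n ℝ) : ℝ := ∑ i, ∑ j, A i j * B i j

theorem frobeniusInner_eq_trace (A B : Matrix m n ℝ) : frobeniusInner A B = (Aᵀ * B).trace := by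
  simp only [frobeniusInner, trace, diag, mul_apply, transpose_apply]
  exact Finset.sum_comm

theorem frobeniusInner_sub_left (A B C : Matrix m n ℝ) :
    frobeniusInner (A - B) C = frobeniusInner A C - frobeniusInner B C := by
  simp [frobeniusInner, sub_mul]

theorem frobeniusInner_smul_right (c : ℝ) (A B : Matrix m n ℝ) :
    frobeniusInner A (c • B) = c * frobeniusInner A B := by
  simp [frobeniusInner, Finset.mul_sum, mul_left_comm]

theorem frobeniusInner_self (A : Matrix m n ℝ) : frobeniusInner A A = ‖A‖ ^ 2 := by
  rw [frobenius_norm_def, ← Real.sqrt_eq_rpow, Real.sq_sqrt (by positivity)]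
  simp [frobeniusInner, sq]

theorem abs_frobeniusInner_le (A B : Matrix m n ℝ) : |frobeniusInner A B| ≤ ‖A‖ * ‖B‖ := by
  refine abs_le_of_sq_le_sq ?_ (by positivity)
  rw [mul_pow, ← frobeniusInner_self, ← frobeniusInner_self]
  simpa only [frobeniusInner, Fintype.sum_prod_type, sq] using
    Finset.sum_mul_sq_le_sq_mul_sq Finset.univ (fun p : m × n => A p.1 p.2) (fun p => B p.1 p.2)

theorem fderiv_apply_sub_le_of_gradient_lipschitz {f : Matrix m n ℝ → ℝ}
    {G : Matrix m n ℝ → Matrix m n ℝ} {L : ℝ}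
    (hG : ∀ X D, fderiv ℝ f X D = frobeniusInner (G X) D)
    (hLip : ∀ X Y, ‖G X - G Y‖ ≤ L * ‖X - Y‖) (X Y D : Matrix m n ℝ) :
    fderiv ℝ f Y D - fderiv ℝ f X D ≤ L * ‖Y - X‖ * ‖D‖ := by
  rw [hG, hG, ← frobeniusInner_sub_left]
  calc frobeniusInner (G Y - G X) D ≤ ‖G Y - G X‖ * ‖D‖ :=
        (le_abs_self _).trans (abs_frobeniusInner_le _ _)
    _ ≤ L * ‖Y - X‖ * ‖D‖ := by gcongr; exact hLip Y X

theorem sub_le_of_gradient_lipschitz {f : Matrix m n ℝ → ℝ}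
    {G : Matrix m n ℝ → Matrix m n ℝ} {L : ℝ} (hf : Differentiable ℝ f)
    (hG : ∀ X D, fderiv ℝ f X D = frobeniusInner (G X) D)
    (hLip : ∀ X Y, ‖G X - G Y‖ ≤ L * ‖X - Y‖) (X O : Matrix m n ℝ) (γ : ℝ) :
    f (X - γ • O) - f X ≤ -γ * frobeniusInner (G X) O + L * γ ^ 2 * ‖O‖ ^ 2 / 2 := by
  -- The type is spelled out so that `fderiv` carries the entrywise topology of `Matrix`, as in `hG`,
  -- rather than the Frobenius one it gets from the general lemma.
  have h : f (X + -(γ • O)) - f X ≤ fderiv ℝ f X (-(γ • O)) + L * ‖-(γ • O)‖ ^ 2 / 2 :=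
    sub_le_fderiv_add_of_fderiv_sub_le hf
      (fderiv_apply_sub_le_of_gradient_lipschitz hG hLip) X (-(γ • O))
  rw [← sub_eq_add_neg, hG, norm_neg, norm_smul, mul_pow, Real.norm_eq_abs, sq_abs, ← neg_smul,
    frobeniusInner_smul_right] at h
  linarith

variable [DecidableEq r]

theorem frobeniusInner_svd_mul_transpose {U : Matrix m r ℝ} (S : Matrix r r ℝ)
    {V : Matrix n r ℝ} (hU : Uᵀ * U = 1) (hV : Vᵀ * V = 1) :
    frobeniusInner (U * S * Vᵀ) (U * Vᵀ) = S.trace := by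
  rw [frobeniusInner_eq_trace, transpose_mul, transpose_mul, transpose_transpose,
    Matrix.mul_assoc, Matrix.mul_assoc, ← Matrix.mul_assoc Uᵀ, hU, Matrix.one_mul,
    trace_mul_comm, Matrix.mul_assoc, hV, Matrix.mul_one, trace_transpose]

variable [DecidableEq n]

theorem sq_norm_le_card_of_posSemidef_one_sub {O : Matrix m n ℝ}
    (hO : (1 - Oᵀ * O).PosSemidef) : ‖O‖ ^ 2 ≤ Fintype.card n := by
  have h := hO.trace_nonneg
  rw [trace_sub, trace_one, ← frobeniusInner_eq_trace, frobeniusInner_self] at h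
  linarith

theorem frobeniusInner_le_sqrt_card_mul_norm {O : Matrix m n ℝ}
    (hO : (1 - Oᵀ * O).PosSemidef) (B : Matrix m n ℝ) :
    frobeniusInner B O ≤ √(Fintype.card n) * ‖B‖ := by
  have hOn : ‖O‖ ≤ √(Fintype.card n) :=
    Real.le_sqrt_of_sq_le (sq_norm_le_card_of_posSemidef_one_sub hO)
  calc frobeniusInner B O ≤ ‖B‖ * ‖O‖ := (le_abs_self _).trans (abs_frobeniusInner_le B O)
    _ ≤ √(Fintype.card n) * ‖B‖ := by rw [mul_comm]; gcongr

theorem posSemidef_one_sub_transpose_mul_self_mul {O : Matrix m n ℝ}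
    (hO : (1 - Oᵀ * O).PosSemidef) {V : Matrix n r ℝ} (hV : Vᵀ * V = 1) :
    (1 - (O * V)ᵀ * (O * V)).PosSemidef := by
  convert hO.conjTranspose_mul_mul_same V using 1
  simp [conjTranspose_eq_transpose_of_trivial, Matrix.mul_sub, Matrix.sub_mul, hV,
    Matrix.mul_assoc]

theorem posSemidef_one_sub_transpose_mul_self_mul_transpose {U : Matrix m r ℝ}
    {V : Matrix n r ℝ} (hU : Uᵀ * U = 1) (hV : Vᵀ * V = 1) :
    (1 - (U * Vᵀ)ᵀ * (U * Vᵀ)).PosSemidef := by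
  have hUV : (U * Vᵀ)ᵀ * (U * Vᵀ) = V * Vᵀ := by
    simp only [transpose_mul, transpose_transpose, Matrix.mul_assoc]
    rw [← Matrix.mul_assoc Uᵀ, hU, Matrix.one_mul]
  have hP : V * Vᵀ * (V * Vᵀ) = V * Vᵀ := by
    rw [Matrix.mul_assoc, ← Matrix.mul_assoc Vᵀ, hV, Matrix.one_mul]
  rw [hUV]
  convert posSemidef_conjTranspose_mul_self (1 - V * Vᵀ) using 1
  simp [conjTranspose_eq_transpose_of_trivial, transpose_mul, Matrix.mul_sub,
    Matrix.sub_mul, hP]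

theorem transpose_mul_mul_apply_le_one {O : Matrix m n ℝ} (hO : (1 - Oᵀ * O).PosSemidef)
    {U : Matrix m r ℝ} {V : Matrix n r ℝ} (hU : Uᵀ * U = 1) (hV : Vᵀ * V = 1) (k : r) :
    (Uᵀ * O * V) k k ≤ 1 := by
  have hOV : ((O * V)ᵀ * (O * V)) k k ≤ 1 := by
    have h := (posSemidef_one_sub_transpose_mul_self_mul hO hV).diag_nonneg (i := k)
    rw [sub_apply, one_apply_eq] at h
    linarith
  calc (Uᵀ * O * V) k k = (Uᵀ * (O * V)) k k := by rw [Matrix.mul_assoc]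
    _ ≤ √((Uᵀ * U) k k) * √(((O * V)ᵀ * (O * V)) k k) :=
        transpose_mul_apply_le_sqrt_mul_sqrt _ _ k
    _ ≤ 1 := by
        rw [hU, one_apply_eq, Real.sqrt_one, one_mul]
        exact Real.sqrt_le_one.mpr hOV

theorem frobeniusInner_svd_le_trace {O : Matrix m n ℝ} (hO : (1 - Oᵀ * O).PosSemidef)
    {U : Matrix m r ℝ} {S : Matrix r r ℝ} {V : Matrix n r ℝ} (hU : Uᵀ * U = 1)
    (hV : Vᵀ * V = 1) (hSdiag : S.IsDiag) (hSpos : ∀ i, 0 ≤ S i i) :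
    frobeniusInner (U * S * Vᵀ) O ≤ S.trace := by
  rw [← hSdiag.diagonal_diag]
  calc frobeniusInner (U * diagonal S.diag * Vᵀ) O
        = (V * (diagonal S.diag * (Uᵀ * O))).trace := by
          simp [frobeniusInner_eq_trace, transpose_mul, Matrix.mul_assoc]
    _ = ∑ k, S k k * (Uᵀ * O * V) k k := by
          rw [trace_mul_comm, Matrix.mul_assoc]
          simp only [trace, diag, diagonal_mul]
    _ ≤ ∑ k, S k k := Finset.sum_le_sum fun k _ =>
          mul_le_of_le_one_right (hSpos k) (transpose_mul_mul_apply_le_one hO hU hV k)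
    _ = (diagonal S.diag).trace := by simp [trace]

theorem IsHermitian.exists_orthogonal_diagonalization {A : Matrix n n ℝ} (hA : A.IsHermitian) :
    ∃ W : Matrix n n ℝ, Wᵀ * W = 1 ∧ W * Wᵀ = 1 ∧ A = W * diagonal hA.eigenvalues * Wᵀ := by
  have hW := hA.eigenvectorUnitary.2
  rw [Unitary.mem_iff] at hW
  simp only [star_eq_conjTranspose, conjTranspose_eq_transpose_of_trivial] at hW
  refine ⟨hA.eigenvectorUnitary, hW.1, hW.2, ?_⟩
  conv_lhs => rw [hA.spectral_theorem]
  simp [star_eq_conjTranspose, conjTranspose_eq_transpose_of_trivial]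

end

theorem exists_frobeniusInner_eq_nuclearNorm {m n : ℕ} (A : Matrix (Fin m) (Fin n) ℝ) :
    ∃ O : Matrix (Fin m) (Fin n) ℝ,
      frobeniusInner A O = nuclearNorm A ∧ (1 - Oᵀ * O).PosSemidef := by
  set hAA := isHermitian_conjTranspose_mul_self A
  set Λ := hAA.eigenvalues
  have hΛ : ∀ i, 0 ≤ Λ i := (posSemidef_conjTranspose_mul_self A).eigenvalues_nonneg
  obtain ⟨W, hWW, hWW', hspec⟩ := hAA.exists_orthogonal_diagonalization
  replace hspec : Aᵀ * A = W * diagonal Λ * Wᵀ := hspec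
  have hmul : ∀ X Y : Matrix (Fin n) (Fin n) ℝ, W * X * Wᵀ * (W * Y * Wᵀ) = W * (X * Y) * Wᵀ := by
    intro X Y
    simp only [Matrix.mul_assoc]
    rw [← Matrix.mul_assoc Wᵀ, hWW, Matrix.one_mul]
  -- `D = Λ^(-1/2)` on the support of `Λ` and `0` off it, since `(√0)⁻¹ = 0`; `A W D Wᵀ` is the
  -- polar factor of `A`.
  let D : Matrix (Fin n) (Fin n) ℝ := diagonal fun i => (√(Λ i))⁻¹
  have hDt : (W * D * Wᵀ)ᵀ = W * D * Wᵀ := by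
    simp [D, transpose_mul, Matrix.mul_assoc]
  refine ⟨A * (W * D * Wᵀ), ?_, ?_⟩
  · rw [frobeniusInner_eq_trace, ← Matrix.mul_assoc, hspec, hmul, trace_mul_comm,
      ← Matrix.mul_assoc, hWW, Matrix.one_mul, diagonal_mul_diagonal, trace_diagonal]
    exact Finset.sum_congr rfl fun i _ => by rw [← div_eq_mul_inv, Real.div_sqrt]
  · have hOO : (A * (W * D * Wᵀ))ᵀ * (A * (W * D * Wᵀ)) = W * (D * (diagonal Λ * D)) * Wᵀ := by
      rw [transpose_mul, hDt, Matrix.mul_assoc, ← Matrix.mul_assoc Aᵀ, hspec, hmul, hmul]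
    have hone : (1 : Matrix (Fin n) (Fin n) ℝ) = W * 1 * Wᵀ := by rw [Matrix.mul_one, hWW']
    rw [hOO, hone, ← Matrix.sub_mul, ← Matrix.mul_sub, diagonal_mul_diagonal,
      diagonal_mul_diagonal, ← diagonal_one, diagonal_sub]
    rw [← conjTranspose_eq_transpose_of_trivial]
    refine (PosSemidef.diagonal fun i => ?_).mul_mul_conjTranspose_same W
    simp only [Pi.zero_apply, sub_nonneg]
    rw [mul_left_comm, ← mul_inv, Real.mul_self_sqrt (hΛ i)]
    exact mul_inv_le_one

theorem nuclearNorm_le_frobeniusInner_add {m n r : ℕ} (A : Matrix (Fin m) (Fin n) ℝ)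
    {U : Matrix (Fin m) (Fin r) ℝ} {S : Matrix (Fin r) (Fin r) ℝ} {V : Matrix (Fin n) (Fin r) ℝ}
    (hU : Uᵀ * U = 1) (hV : Vᵀ * V = 1) (hSdiag : S.IsDiag) (hSpos : ∀ i, 0 ≤ S i i) :
    nuclearNorm A ≤ frobeniusInner A (U * Vᵀ) + 2 * √n * ‖A - U * S * Vᵀ‖ := by
  obtain ⟨O, hAO, hO⟩ := exists_frobeniusInner_eq_nuclearNorm A
  have hUV := posSemidef_one_sub_transpose_mul_self_mul_transpose hU hV
  have h1 := frobeniusInner_le_sqrt_card_mul_norm hO (A - U * S * Vᵀ)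
  have h2 := frobeniusInner_le_sqrt_card_mul_norm hUV (U * S * Vᵀ - A)
  rw [frobeniusInner_sub_left, hAO, Fintype.card_fin] at h1
  rw [frobeniusInner_sub_left, frobeniusInner_svd_mul_transpose S hU hV, norm_sub_rev,
    Fintype.card_fin] at h2
  have h3 := frobeniusInner_svd_le_trace hO hU hV hSdiag hSpos
  linarith

end Matrix

open Matrix

/-- **step lemma for Muon, Lemma 3 of the paper.**  Let
`f : ℝ^{m×n} → ℝ` be differentiable with `L`-smooth gradient `G` (with respect to the
Frobenius norm, which is the norm `‖·‖` used throughout this statement), let `m ≥ n`,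
let `M = U_M Σ_M V_Mᵀ` be a reduced SVD of an arbitrary matrix `M`, and set
`X‡ := X† − γ·U_M V_Mᵀ`.  Then
`f(X‡) − f(X†) ≤ −γ‖∇f(X†)‖_{S₁} + 2√n·γ·‖∇f(X†) − M‖_F + L n γ²/2`. -/
theorem muon_step_lemma
    {m n r : ℕ} (hmn : n ≤ m)
    (f : Matrix (Fin m) (Fin n) ℝ → ℝ) (G : Matrix (Fin m) (Fin n) ℝ → Matrix (Fin m) (Fin n) ℝ)
    (L : ℝ)
    (hdiff : Differentiable ℝ f)
    (hG : ∀ X Y : Matrix (Fin m) (Fin n) ℝ, fderiv ℝ f X Y = ∑ i, ∑ j, G X i j * Y i j)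
    (hLip : ∀ X Y : Matrix (Fin m) (Fin n) ℝ, ‖G X - G Y‖ ≤ L * ‖X - Y‖)
    (Xdag M : Matrix (Fin m) (Fin n) ℝ)
    (U : Matrix (Fin m) (Fin r) ℝ) (S : Matrix (Fin r) (Fin r) ℝ)
    (V : Matrix (Fin n) (Fin r) ℝ)
    (hU : Uᵀ * U = 1) (hV : Vᵀ * V = 1)
    (hSdiag : ∀ i j, i ≠ j → S i j = 0) (hSpos : ∀ i, 0 ≤ S i i)
    (hM : M = U * S * Vᵀ)
    (γ : ℝ) (hγ : 0 < γ) :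
    f (Xdag - γ • (U * Vᵀ)) - f Xdag
      ≤ -γ * nuclearNorm (G Xdag) + 2 * Real.sqrt n * γ * ‖G Xdag - M‖
        + L * n * γ ^ 2 / 2 := by
  rcases Nat.eq_zero_or_pos n with rfl | hn
  · rw [Subsingleton.elim (Xdag - γ • (U * Vᵀ)) Xdag, Subsingleton.elim (G Xdag - M) 0]
    simp [nuclearNorm]
  -- `0 ≤ L` needs a nonzero matrix, which exists once `0 < n ≤ m`.
  have : NeZero n := ⟨hn.ne'⟩
  have : NeZero m := ⟨(hn.trans_le hmn).ne'⟩
  have hL : 0 ≤ L := nonneg_of_norm_sub_le_mul hLip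
  have hdescent := sub_le_of_gradient_lipschitz hdiff hG hLip Xdag (U * Vᵀ) γ
  have hnuc := nuclearNorm_le_frobeniusInner_add (G Xdag) hU hV hSdiag hSpos
  have hnorm : ‖U * Vᵀ‖ ^ 2 ≤ n := by
    simpa using sq_norm_le_card_of_posSemidef_one_sub
      (posSemidef_one_sub_transpose_mul_self_mul_transpose hU hV)
  subst hM
  linarith [mul_le_mul_of_nonneg_left hnuc hγ.le,
    mul_le_mul_of_nonneg_left hnorm (mul_nonneg hL (sq_nonneg γ))]
end
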